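/- arXiv:2207.07941 — 4 statements merged into one kernel-verified Lean document; each statement's English description precedes it below -/
import Mathlib

section
/- Let Ω ⊆ ℝ^d, let F : ℝ^d → ℝ be differentiable with L := sup_{w∈Ω} ‖∇F(w)‖₂ < ∞, and let 0 < q < M be integers. Let u_1,…,u_M : Ω → ℝ^d be the expected outputs of M aggregation rules under a fixed attack. Suppose (i) λ := max_{i∈[q]} sup_{w∈Ω} ‖u_i(w)‖₂ < ∞ (the attack may make ⟨u_i(w), ∇F(w)⟩ negative for i ≤ q); (ii) for each m' ∈ {q+1,…,M} there exists β_{m'} > 0 such that ⟨u_{m'}(w), ∇F(w)⟩ ≥ β_{m'} for all w ∈ Ω. If M/q > 1 + λL / min_{m'∈{q+1,…,M}} β_{m'}, then the uniform mixture is resilient against the attack: for every w ∈ Ω, (1/M) Σ_{m=1}^M ⟨u_m(w), ∇F(w)⟩ > 0. -/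
open RealInnerProductSpace

/-- Proposition 1: resilience of the uniform mixture of `M` aggregation
rules.  `Ω ⊆ ℝ^d`, `F` differentiable with gradient `gradF`, `L = sup_{w ∈ Ω} ‖∇F(w)‖₂`,
`u_1, …, u_M` the expected aggregator outputs under a fixed attack,
`λ = max_{i ≤ q} sup_{w ∈ Ω} ‖u_i(w)‖₂`; the rules with index `> q` are resilient:
`⟨u_{m'}(w), ∇F(w)⟩ ≥ β_{m'} > 0` on `Ω`.  If `M/q > 1 + λL / min_{m'} β_{m'}`, then for all
`w ∈ Ω` the expected mixed output has positive inner product with `∇F(w)`. -/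
theorem mixtailor_resilient {d M q : ℕ} (hq : 0 < q) (hqM : q < M)
    (Ω : Set (EuclideanSpace ℝ (Fin d)))
    (F : EuclideanSpace ℝ (Fin d) → ℝ)
    (gradF : EuclideanSpace ℝ (Fin d) → EuclideanSpace ℝ (Fin d))
    (hF : ∀ w, HasGradientAt F (gradF w) w)
    (u : Fin M → EuclideanSpace ℝ (Fin d) → EuclideanSpace ℝ (Fin d))
    (L lam : ℝ)
    (hL : IsLUB ((fun w => ‖gradF w‖) '' Ω) L)
    (hlam : IsLUB {r : ℝ | ∃ i : Fin M, (i : ℕ) < q ∧ ∃ w ∈ Ω, r = ‖u i w‖} lam)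
    (β : Fin M → ℝ)
    (hβpos : ∀ m : Fin M, q ≤ (m : ℕ) → 0 < β m)
    (hgood : ∀ m : Fin M, q ≤ (m : ℕ) → ∀ w ∈ Ω, β m ≤ ⟪u m w, gradF w⟫)
    (hM : (M : ℝ) / q > 1 + lam * L / sInf (β '' {m : Fin M | q ≤ (m : ℕ)})) :
    ∀ w ∈ Ω, 0 < (M : ℝ)⁻¹ * ∑ m, ⟪u m w, gradF w⟫ := by
  intro w hw
  set b : ℝ := sInf (β '' {m : Fin M | q ≤ (m : ℕ)}) with hb_def
  have hM0 : 0 < M := lt_trans hq hqM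
  -- the set is finite and nonempty
  have hSne : ({m : Fin M | q ≤ (m : ℕ)}).Nonempty := ⟨⟨q, hqM⟩, by simp⟩
  have hSfin : (β '' {m : Fin M | q ≤ (m : ℕ)}).Finite :=
    Set.Finite.image _ (Set.toFinite _)
  have hbmem : b ∈ β '' {m : Fin M | q ≤ (m : ℕ)} :=
    (hSne.image _).csInf_mem hSfin
  obtain ⟨m0, hm0, hbm0⟩ := hbmem
  have hbpos : 0 < b := hbm0 ▸ hβpos m0 hm0
  have hble : ∀ m : Fin M, q ≤ (m : ℕ) → b ≤ β m := fun m hm =>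
    csInf_le hSfin.bddBelow ⟨m, hm, rfl⟩
  have hLw : ‖gradF w‖ ≤ L := hL.1 ⟨w, hw, rfl⟩
  have hL0 : 0 ≤ L := le_trans (norm_nonneg _) hLw
  have hlamw : ∀ i : Fin M, (i : ℕ) < q → ‖u i w‖ ≤ lam := fun i hi =>
    hlam.1 ⟨i, hi, w, hw, rfl⟩
  have hlam0 : 0 ≤ lam :=
    le_trans (norm_nonneg (u ⟨0, hM0⟩ w)) (hlamw ⟨0, hM0⟩ hq)
  -- pointwise lower bounds
  have hbound : ∀ m : Fin M,
      (if (m : ℕ) < q then -(lam * L) else b) ≤ ⟪u m w, gradF w⟫ := by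
    intro m
    by_cases hm : (m : ℕ) < q
    · simp only [hm, if_pos]
      have habs : |⟪u m w, gradF w⟫| ≤ lam * L := by
        refine le_trans (abs_real_inner_le_norm _ _) ?_
        exact mul_le_mul (hlamw m hm) hLw (norm_nonneg _) hlam0
      linarith [(abs_le.mp habs).1]
    · simp only [hm, if_neg]
      exact le_trans (hble m (not_lt.mp hm)) (hgood m (not_lt.mp hm) w hw)
  have hsum : (q : ℝ) * (-(lam * L)) + ((M : ℝ) - q) * b ≤
      ∑ m, ⟪u m w, gradF w⟫ := by
    have h1 : ∑ m : Fin M, (if (m : ℕ) < q then -(lam * L) else b) ≤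
        ∑ m, ⟪u m w, gradF w⟫ := Finset.sum_le_sum fun m _ => hbound m
    refine le_trans (le_of_eq ?_) h1
    rw [Fin.sum_univ_eq_sum_range (fun i => if i < q then -(lam * L) else b)]
    rw [Finset.range_eq_Ico, ← Finset.sum_Ico_consecutive _ (Nat.zero_le q) hqM.le]
    rw [Finset.sum_congr rfl (fun i hi => if_pos (Finset.mem_Ico.mp hi).2),
        Finset.sum_congr rfl (fun i hi => if_neg (not_lt.mpr (Finset.mem_Ico.mp hi).1))]
    simp [Nat.cast_sub hqM.le, mul_comm]
  -- the key inequality from hM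
  have hq' : (0 : ℝ) < q := Nat.cast_pos.mpr hq
  have hkey : (b + lam * L) / b < (M : ℝ) / q := by
    rw [add_div, div_self hbpos.ne']
    exact hM
  have hkey2 : (b + lam * L) * q < (M : ℝ) * b := (div_lt_div_iff₀ hbpos hq').mp hkey
  have hpos : 0 < (q : ℝ) * (-(lam * L)) + ((M : ℝ) - q) * b := by nlinarith
  have hM' : (0 : ℝ) < (M : ℝ)⁻¹ := by positivity
  exact mul_pos hM' (lt_of_lt_of_le hpos hsum)
end

section
/- Fix w ∈ ℝ^d, p ≥ 1, and integers n > 2f + 2 with f ≥ 0. Suppose the good workers' updates V_1,…,V_{n−f} are independent random vectors in ℝ^d with E[V_i] = ∇F(w) and E[‖V_i − ∇F(w)‖₂²] ≤ σ², and B_1,…,B_f are arbitrary random vectors possibly dependent on the V_i. Let U be the output of the generalized Krum rule with parameter p. Then for each r ∈ {2,3,4} there is a constant C, depending only on n, f, d, p, r, such that E[‖U‖₂^r] ≤ C · E[‖G(w,z)‖₂^r]. -/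
open MeasureTheory ProbabilityTheory Finset

/-- The `r`-(quasi)norm on `ℝ^d`: `‖x‖_r = (Σ_k |x_k|^r)^{1/r}`. -/
noncomputable def pnorm {d : ℕ} (r : ℝ) (x : EuclideanSpace ℝ (Fin d)) : ℝ :=
  (∑ k, |x k| ^ r) ^ (1 / r)

/-!
Krum's selection rule is controlled by the good workers alone. Each good worker has at least one
good worker outside its `n - f - 2` nearest neighbours, so all its neighbours lie within the
diameter `B` of the good cluster and its score is at most `(n - f - 2) B²`. Because there are only
`f < n - f - 2` Byzantine workers, the selected worker has a good neighbour, at distance at most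
`√(n - f - 2) B` by minimality of its score. Hence `‖U‖` is bounded pointwise by a constant
multiple of `maxᵢ ‖V_i‖`, so `‖U‖^r ≤ C Σᵢ ‖V_i‖^r`, and integrating gives the moment bound.
-/

section Pnorm

variable {d : ℕ} {p : ℝ}

lemma pnorm_nonneg (p : ℝ) (x : EuclideanSpace ℝ (Fin d)) : 0 ≤ pnorm p x :=
  Real.rpow_nonneg (sum_nonneg fun _ _ => Real.rpow_nonneg (abs_nonneg _) _) _

lemma abs_le_pnorm (hp : 0 < p) (x : EuclideanSpace ℝ (Fin d)) (k : Fin d) :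
    |x k| ≤ pnorm p x := by
  have hk : |x k| ^ p ≤ ∑ j, |x j| ^ p :=
    single_le_sum (f := fun j => |x j| ^ p) (fun j _ => Real.rpow_nonneg (abs_nonneg _) _)
      (mem_univ k)
  calc |x k| = (|x k| ^ p) ^ (1 / p) := by
        rw [← Real.rpow_mul (abs_nonneg _), mul_one_div_cancel hp.ne', Real.rpow_one]
    _ ≤ pnorm p x := Real.rpow_le_rpow (Real.rpow_nonneg (abs_nonneg _) _) hk (by positivity)

lemma norm_le_sqrt_mul_pnorm (hp : 0 < p) (x : EuclideanSpace ℝ (Fin d)) :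
    ‖x‖ ≤ √d * pnorm p x := by
  have hsum : ∑ k, ‖x k‖ ^ 2 ≤ d * pnorm p x ^ 2 := by
    calc ∑ k, ‖x k‖ ^ 2 ≤ ∑ _k : Fin d, pnorm p x ^ 2 := by
          gcongr with k
          rw [Real.norm_eq_abs]
          exact abs_le_pnorm hp x k
      _ = d * pnorm p x ^ 2 := by simp
  calc ‖x‖ = √(∑ k, ‖x k‖ ^ 2) := EuclideanSpace.norm_eq x
    _ ≤ √(d * pnorm p x ^ 2) := Real.sqrt_le_sqrt hsum
    _ = √d * pnorm p x := by
        rw [Real.sqrt_mul (Nat.cast_nonneg d), Real.sqrt_sq (pnorm_nonneg p x)]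

lemma pnorm_le_rpow_mul_norm (hp : 0 < p) (x : EuclideanSpace ℝ (Fin d)) :
    pnorm p x ≤ (d : ℝ) ^ (1 / p) * ‖x‖ := by
  have hsum : ∑ k, |x k| ^ p ≤ d * ‖x‖ ^ p := by
    calc ∑ k, |x k| ^ p ≤ ∑ _k : Fin d, ‖x‖ ^ p := by
          gcongr with k
          simpa only [Real.norm_eq_abs] using PiLp.norm_apply_le x k
      _ = d * ‖x‖ ^ p := by simp
  calc pnorm p x ≤ (d * ‖x‖ ^ p) ^ (1 / p) :=
        Real.rpow_le_rpow (sum_nonneg fun _ _ => Real.rpow_nonneg (abs_nonneg _) _) hsum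
          (by positivity)
    _ = (d : ℝ) ^ (1 / p) * ‖x‖ := by
        rw [Real.mul_rpow (Nat.cast_nonneg d) (Real.rpow_nonneg (norm_nonneg x) p),
          ← Real.rpow_mul (norm_nonneg x), mul_one_div_cancel hp.ne', Real.rpow_one]

end Pnorm

section Krum

variable {ι : Type*} [DecidableEq ι]

structure IsKrumChoice (δ : ι → ι → ℝ) (N : ι → Finset ι) (k : ℕ) (istar : ι) : Prop where
  card_neighbours : ∀ i, #(N i) = k
  nearest : ∀ i, ∀ j ∈ N i, ∀ l, l ∉ N i → l ≠ i → δ i j ≤ δ i l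
  score_le : ∀ i, ∑ j ∈ N istar, δ istar j ^ 2 ≤ ∑ j ∈ N i, δ i j ^ 2

variable {δ : ι → ι → ℝ} {N : ι → Finset ι} {Good : Finset ι} {B : ℝ}

lemma le_of_mem_nearest {i : ι} (hk : #(N i) + 1 < #Good)
    (hN : ∀ j ∈ N i, ∀ l, l ∉ N i → l ≠ i → δ i j ≤ δ i l)
    (hB : ∀ l ∈ Good, δ i l ≤ B) {j : ι} (hj : j ∈ N i) : δ i j ≤ B := by
  obtain ⟨l, hlGood, hl⟩ :=
    exists_mem_notMem_of_card_lt_card ((card_insert_le i (N i)).trans_lt hk)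
  rw [mem_insert, not_or] at hl
  exact (hN j hj l hl.2 hl.1).trans (hB l hlGood)

lemma IsKrumChoice.exists_mem_le [Fintype ι] {k : ℕ} {istar : ι} (h : IsKrumChoice δ N k istar)
    (hδ : ∀ i j, 0 ≤ δ i j) (hk : k + 1 < #Good) (hbad : Fintype.card ι < k + #Good)
    (hB : ∀ i ∈ Good, ∀ j ∈ Good, δ i j ≤ B) :
    ∃ j ∈ Good, δ istar j ≤ √k * B := by
  obtain ⟨i₀, hi₀⟩ : Good.Nonempty := card_pos.1 (by omega)
  obtain ⟨j, hj⟩ := inter_nonempty_of_card_lt_card_add_card (subset_univ (N istar))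
    (subset_univ Good) (by rwa [card_univ, h.card_neighbours])
  rw [mem_inter] at hj
  refine ⟨j, hj.2, ?_⟩
  have hB₀ : 0 ≤ B := (hδ i₀ i₀).trans (hB i₀ hi₀ i₀ hi₀)
  have hscore₀ : ∑ l ∈ N i₀, δ i₀ l ^ 2 ≤ k * B ^ 2 := by
    calc ∑ l ∈ N i₀, δ i₀ l ^ 2 ≤ ∑ _l ∈ N i₀, B ^ 2 := by
          refine sum_le_sum fun l hl => pow_le_pow_left₀ (hδ _ _) ?_ 2
          exact le_of_mem_nearest (by rwa [h.card_neighbours]) (h.nearest i₀) (hB i₀ hi₀) hl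
      _ = k * B ^ 2 := by rw [sum_const, nsmul_eq_mul, h.card_neighbours]
  have hsq : δ istar j ^ 2 ≤ k * B ^ 2 :=
    (single_le_sum (fun l _ => sq_nonneg (δ istar l)) hj.1).trans
      ((h.score_le i₀).trans hscore₀)
  calc δ istar j ≤ √(k * B ^ 2) := Real.le_sqrt_of_sq_le hsq
    _ = √k * B := by rw [Real.sqrt_mul (Nat.cast_nonneg k), Real.sqrt_sq hB₀]

lemma IsKrumChoice.norm_le [Fintype ι] {d : ℕ} {p : ℝ} (hp : 0 < p)
    {x : ι → EuclideanSpace ℝ (Fin d)} {k : ℕ} {istar : ι}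
    (h : IsKrumChoice (fun i j => pnorm p (x i - x j)) N k istar)
    (hk : k + 1 < #Good) (hbad : Fintype.card ι < k + #Good) {M : ℝ}
    (hM : ∀ i ∈ Good, ‖x i‖ ≤ M) :
    ‖x istar‖ ≤ (1 + √d * √k * (2 * (d : ℝ) ^ (1 / p))) * M := by
  have hgood : ∀ i ∈ Good, ∀ j ∈ Good, pnorm p (x i - x j) ≤ 2 * (d : ℝ) ^ (1 / p) * M := by
    intro i hi j hj
    calc pnorm p (x i - x j) ≤ (d : ℝ) ^ (1 / p) * ‖x i - x j‖ := pnorm_le_rpow_mul_norm hp _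
      _ ≤ (d : ℝ) ^ (1 / p) * (M + M) := by
          gcongr
          exact (norm_sub_le _ _).trans (add_le_add (hM i hi) (hM j hj))
      _ = 2 * (d : ℝ) ^ (1 / p) * M := by ring
  obtain ⟨j, hj, hclose⟩ :=
    h.exists_mem_le (fun _ _ => pnorm_nonneg _ _) hk hbad hgood
  calc ‖x istar‖ ≤ ‖x j‖ + ‖x istar - x j‖ := norm_le_norm_add_norm_sub' _ _
    _ ≤ M + √d * (√k * (2 * (d : ℝ) ^ (1 / p) * M)) := by
        gcongr
        · exact hM j hj
        · exact (norm_le_sqrt_mul_pnorm hp _).trans (by gcongr)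
    _ = (1 + √d * √k * (2 * (d : ℝ) ^ (1 / p))) * M := by ring

end Krum

lemma integral_le_const_mul_sum_integral {Ω ι : Type*} [MeasurableSpace Ω] {μ : Measure Ω}
    {f : Ω → ℝ} {g : ι → Ω → ℝ} {s : Finset ι} {c : ℝ} (hf : Integrable f μ)
    (hg : ∀ i ∈ s, Integrable (g i) μ) (hfg : ∀ ω, f ω ≤ c * ∑ i ∈ s, g i ω) :
    ∫ ω, f ω ∂μ ≤ c * ∑ i ∈ s, ∫ ω, g i ω ∂μ := by
  calc ∫ ω, f ω ∂μ ≤ ∫ ω, c * ∑ i ∈ s, g i ω ∂μ :=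
        integral_mono hf ((integrable_finsetSum s hg).const_mul c) hfg
    _ = c * ∑ i ∈ s, ∫ ω, g i ω ∂μ := by rw [integral_const_mul, integral_finsetSum s hg]

theorem generalized_krum_moments_iid_general (n f d : ℕ) (hn : 2 * f + 2 < n)
    (p : ℝ) (hp : 1 ≤ p) (r : ℕ) :
    ∃ C : ℝ,
      ∀ (Ωs : Type) [MeasurableSpace Ωs] (μ : Measure Ωs) [IsProbabilityMeasure μ]
        (W : Fin n → Ωs → EuclideanSpace ℝ (Fin d))
        (Good : Finset (Fin n)), Good.card = n - f →
        iIndepFun (fun i : {i : Fin n // i ∈ Good} => W i.1) μ →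
        ∀ (gradFw : EuclideanSpace ℝ (Fin d)) (σ : ℝ),
        (∀ i ∈ Good, MemLp (W i) 2 μ) →
        (∀ i ∈ Good, MemLp (W i) r μ) →
        (∀ i ∈ Good, ∫ ω, W i ω ∂μ = gradFw) →
        (∀ i ∈ Good, ∫ ω, ‖W i ω - gradFw‖ ^ 2 ∂μ ≤ σ ^ 2) →
        ∀ (N : Ωs → Fin n → Finset (Fin n)),
        (∀ ω i, i ∉ N ω i) →
        (∀ ω i, (N ω i).card = n - f - 2) →
        (∀ ω i, ∀ j ∈ N ω i, ∀ l, l ∉ N ω i → l ≠ i →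
          pnorm p (W i ω - W j ω) ≤ pnorm p (W i ω - W l ω)) →
        ∀ (istar : Ωs → Fin n),
        (∀ ω i, ∑ j ∈ N ω (istar ω), pnorm p (W (istar ω) ω - W j ω) ^ 2 ≤
          ∑ j ∈ N ω i, pnorm p (W i ω - W j ω) ^ 2) →
        ∀ (U : Ωs → EuclideanSpace ℝ (Fin d)),
        (∀ ω, U ω = W (istar ω) ω) →
        Integrable (fun ω => ‖U ω‖ ^ r) μ →
        ∫ ω, ‖U ω‖ ^ r ∂μ ≤
          C * (((n : ℝ) - f)⁻¹ * ∑ i ∈ Good, ∫ ω, ‖W i ω‖ ^ r ∂μ) := by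
  set K : ℝ := 1 + √d * √(n - f - 2 : ℕ) * (2 * (d : ℝ) ^ (1 / p))
  refine ⟨K ^ r * ((n : ℝ) - f), ?_⟩
  intro Ωs _ μ _ W Good hcard _ _ _ _ hLr _ _ N _ hNcard hNmin istar hscore U hU hIntU
  have hGood : Good.Nonempty := card_pos.1 (by omega)
  have hbound : ∀ ω, ‖U ω‖ ^ r ≤ K ^ r * ∑ i ∈ Good, ‖W i ω‖ ^ r := by
    intro ω
    obtain ⟨i, hi, hmax⟩ := exists_max_image Good (fun i => ‖W i ω‖) hGood
    have hkrum : IsKrumChoice (fun i j => pnorm p (W i ω - W j ω)) (N ω) (n - f - 2) (istar ω) :=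
      ⟨hNcard ω, hNmin ω, hscore ω⟩
    have hU_le : ‖U ω‖ ≤ K * ‖W i ω‖ := by
      rw [hU ω]
      exact hkrum.norm_le (by linarith) (by omega) (by simp only [Fintype.card_fin]; omega) hmax
    calc ‖U ω‖ ^ r ≤ (K * ‖W i ω‖) ^ r := pow_le_pow_left₀ (norm_nonneg _) hU_le r
      _ ≤ K ^ r * ∑ i ∈ Good, ‖W i ω‖ ^ r := by
          rw [mul_pow]
          gcongr
          exact single_le_sum (f := fun i => ‖W i ω‖ ^ r) (fun _ _ => by positivity) hi
  have hnf : ((n : ℝ) - f) ≠ 0 := by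
    rw [sub_ne_zero]; exact_mod_cast (by omega : n ≠ f)
  calc ∫ ω, ‖U ω‖ ^ r ∂μ ≤ K ^ r * ∑ i ∈ Good, ∫ ω, ‖W i ω‖ ^ r ∂μ :=
        integral_le_const_mul_sum_integral hIntU
          (fun i hi => (hLr i hi).integrable_norm_pow') hbound
    _ = K ^ r * ((n : ℝ) - f) * (((n : ℝ) - f)⁻¹ * ∑ i ∈ Good, ∫ ω, ‖W i ω‖ ^ r ∂μ) := by
        field_simp

/-- Theorem 1, iid moment bound: fix `n > 2f + 2`, `d`, `p ≥ 1`, and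
`r ∈ {2,3,4}`.  There is a constant `C` (depending only on `n, f, d, p, r`) such that for
any probability space, any good workers (a set `Good` of size `n - f`) sending independent
stochastic gradients with mean `∇F(w)` and variance at most `σ²`, any Byzantine updates,
and any pointwise realization `U` of the generalized Krum rule with parameter `p`,
`E[‖U‖₂^r] ≤ C · E[‖G(w,z)‖₂^r]`, where
`E[‖G(w,z)‖₂^r] = (1/(n-f)) Σ_{i ∈ Good} E[‖V_i‖₂^r]`. -/
theorem generalized_krum_moments_iid (n f d : ℕ) (hn : 2 * f + 2 < n)
    (p : ℝ) (hp : 1 ≤ p) (r : ℕ) (hr : r ∈ ({2, 3, 4} : Set ℕ)) :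
    ∃ C : ℝ,
      ∀ (Ωs : Type) [MeasurableSpace Ωs] (μ : Measure Ωs) [IsProbabilityMeasure μ]
        (W : Fin n → Ωs → EuclideanSpace ℝ (Fin d))
        (Good : Finset (Fin n)), Good.card = n - f →
        iIndepFun (fun i : {i : Fin n // i ∈ Good} => W i.1) μ →
        ∀ (gradFw : EuclideanSpace ℝ (Fin d)) (σ : ℝ),
        (∀ i ∈ Good, MemLp (W i) 2 μ) →
        (∀ i ∈ Good, MemLp (W i) r μ) →
        (∀ i ∈ Good, ∫ ω, W i ω ∂μ = gradFw) →
        (∀ i ∈ Good, ∫ ω, ‖W i ω - gradFw‖ ^ 2 ∂μ ≤ σ ^ 2) →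
        ∀ (N : Ωs → Fin n → Finset (Fin n)),
        (∀ ω i, i ∉ N ω i) →
        (∀ ω i, (N ω i).card = n - f - 2) →
        (∀ ω i, ∀ j ∈ N ω i, ∀ l, l ∉ N ω i → l ≠ i →
          pnorm p (W i ω - W j ω) ≤ pnorm p (W i ω - W l ω)) →
        ∀ (istar : Ωs → Fin n),
        (∀ ω i, ∑ j ∈ N ω (istar ω), pnorm p (W (istar ω) ω - W j ω) ^ 2 ≤
          ∑ j ∈ N ω i, pnorm p (W i ω - W j ω) ^ 2) →
        ∀ (U : Ωs → EuclideanSpace ℝ (Fin d)),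
        (∀ ω, U ω = W (istar ω) ω) →
        Integrable (fun ω => ‖U ω‖ ^ r) μ →
        ∫ ω, ‖U ω‖ ^ r ∂μ ≤
          C * (((n : ℝ) - f)⁻¹ * ∑ i ∈ Good, ∫ ω, ‖W i ω‖ ^ r ∂μ) :=
  generalized_krum_moments_iid_general n f d hn p hp r
end

section
/- Let V_1,…,V_{n−f} be independent integrable random vectors in ℝ^d with E[V_i] = g_i, E[‖V_i − g_i‖₂²] ≤ σ² for every i, and suppose (1/(n−f)) Σ_{j=1}^{n−f} ‖g_j − μ‖₂² ≤ Δ² for some μ ∈ ℝ^d. Then for every i ∈ [n−f], E[‖V_i − (1/(n−f)) Σ_{j=1}^{n−f} V_j‖₂²] ≤ 2σ² + 2(n − f + 1)Δ². -/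
/-!
With `m = n - f`, write `V i - avg V = ∑ j aⱼ • (V j - g j) + (g i - avg g)` where
`aⱼ = [j = i] - 1/m`.
The first summand is centred, so its cross term with the constant integrates to zero, and its
terms are independent and centred, so their mean squared norms add up (Pythagoras):
the variance part is `∑ aⱼ² E‖V j - g j‖² ≤ (∑ aⱼ²) σ² = (1 - 1/m) σ²`.
The bias part satisfies `‖g i - avg g‖² ≤ 2‖g i - μ₀‖² + 2‖avg g - μ₀‖²`, where the first
term is at most `m Δ²` and the second at most `Δ²` by Jensen.
-/

open MeasureTheory ProbabilityTheory Finset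
open scoped InnerProductSpace

section

variable {ι E : Type*} [Fintype ι] [Nonempty ι] [SeminormedAddCommGroup E] [NormedSpace ℝ E]

theorem norm_inv_card_smul_sum_sub_sq_le (g : ι → E) (c : E) :
    ‖(Fintype.card ι : ℝ)⁻¹ • ∑ j, g j - c‖ ^ 2 ≤
      (Fintype.card ι : ℝ)⁻¹ * ∑ j, ‖g j - c‖ ^ 2 := by
  have hm : (Fintype.card ι : ℝ) ≠ 0 := by exact_mod_cast Fintype.card_ne_zero
  have hconvex : ConvexOn ℝ Set.univ (fun x : E => ‖x‖ ^ 2) :=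
    (convexOn_norm convex_univ).pow (fun _ _ => norm_nonneg _) 2
  calc ‖(Fintype.card ι : ℝ)⁻¹ • ∑ j, g j - c‖ ^ 2
      = ‖∑ j, (Fintype.card ι : ℝ)⁻¹ • (g j - c)‖ ^ 2 := by
        rw [← smul_sum, sum_sub_distrib, smul_sub, sum_const, card_univ,
          ← Nat.cast_smul_eq_nsmul ℝ, smul_smul, inv_mul_cancel₀ hm, one_smul]
    _ ≤ ∑ j, (Fintype.card ι : ℝ)⁻¹ • ‖g j - c‖ ^ 2 :=
        hconvex.map_sum_le (fun _ _ => by positivity) (by simp [hm]) (by simp)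
    _ = (Fintype.card ι : ℝ)⁻¹ * ∑ j, ‖g j - c‖ ^ 2 := (mul_sum _ _ _).symm

theorem norm_sub_inv_card_smul_sum_sq_le (g : ι → E) (c : E) (i : ι) :
    ‖g i - (Fintype.card ι : ℝ)⁻¹ • ∑ j, g j‖ ^ 2 ≤
      2 * (Fintype.card ι + 1) * ((Fintype.card ι : ℝ)⁻¹ * ∑ j, ‖g j - c‖ ^ 2) := by
  have hm : (Fintype.card ι : ℝ) ≠ 0 := by exact_mod_cast Fintype.card_ne_zero
  set D := (Fintype.card ι : ℝ)⁻¹ * ∑ j, ‖g j - c‖ ^ 2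
  have hi : ‖g i - c‖ ^ 2 ≤ Fintype.card ι * D := by
    rw [mul_inv_cancel_left₀ hm]
    exact single_le_sum (fun j _ => sq_nonneg ‖g j - c‖) (mem_univ i)
  calc ‖g i - (Fintype.card ι : ℝ)⁻¹ • ∑ j, g j‖ ^ 2
      ≤ (‖g i - c‖ + ‖(Fintype.card ι : ℝ)⁻¹ • ∑ j, g j - c‖) ^ 2 := by
        gcongr
        exact (norm_sub_le_norm_sub_add_norm_sub _ c _).trans_eq (by rw [norm_sub_rev c])
    _ ≤ 2 * (‖g i - c‖ ^ 2 + ‖(Fintype.card ι : ℝ)⁻¹ • ∑ j, g j - c‖ ^ 2) := add_sq_le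
    _ ≤ 2 * (Fintype.card ι * D + D) := by
        gcongr
        exact norm_inv_card_smul_sum_sub_sq_le g c
    _ = 2 * (Fintype.card ι + 1) * D := by ring

theorem sum_ite_sub_inv_card_sq [DecidableEq ι] (i : ι) :
    ∑ j, ((if j = i then 1 else 0) - (Fintype.card ι : ℝ)⁻¹) ^ 2 = 1 - (Fintype.card ι : ℝ)⁻¹ := by
  have hm : (Fintype.card ι : ℝ) ≠ 0 := by exact_mod_cast Fintype.card_ne_zero
  have hsq : ∀ j, ((if j = i then 1 else 0) - (Fintype.card ι : ℝ)⁻¹) ^ 2 =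
      (if j = i then 1 - 2 * (Fintype.card ι : ℝ)⁻¹ else 0) + (Fintype.card ι : ℝ)⁻¹ ^ 2 := by
    intro j; split_ifs <;> ring
  simp only [hsq, sum_add_distrib, sum_ite_eq', mem_univ, if_true, sum_const, card_univ,
    nsmul_eq_mul]
  field_simp
  ring

end

section

variable {Ω E : Type*} {mΩ : MeasurableSpace Ω} {μ : Measure Ω}
  [NormedAddCommGroup E] [InnerProductSpace ℝ E]

theorem MeasureTheory.MemLp.integrable_inner {X Y : Ω → E} (hX : MemLp X 2 μ)
    (hY : MemLp Y 2 μ) :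
    Integrable (fun ω => ⟪X ω, Y ω⟫_ℝ) μ :=
  (L2.integrable_inner (𝕜 := ℝ) (hX.toLp X) (hY.toLp Y)).congr <| by
    filter_upwards [hX.coeFn_toLp, hY.coeFn_toLp] with ω hXω hYω
    rw [hXω, hYω]

theorem integral_norm_sum_sq_of_pairwise_integral_inner_eq_zero {ι : Type*} [Fintype ι]
    {X : ι → Ω → E} (hX : ∀ j, MemLp (X j) 2 μ)
    (horth : Pairwise fun j k => ∫ ω, ⟪X j ω, X k ω⟫_ℝ ∂μ = 0) :
    ∫ ω, ‖∑ j, X j ω‖ ^ 2 ∂μ = ∑ j, ∫ ω, ‖X j ω‖ ^ 2 ∂μ := by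
  have hexpand : ∀ ω, ‖∑ j, X j ω‖ ^ 2 = ∑ j, ∑ k, ⟪X j ω, X k ω⟫_ℝ := fun ω => by
    rw [← real_inner_self_eq_norm_sq, sum_inner]
    simp only [inner_sum]
  simp_rw [hexpand]
  rw [integral_finsetSum _ fun j _ =>
    integrable_finsetSum _ fun k _ => (hX j).integrable_inner (hX k)]
  refine sum_congr rfl fun j _ => ?_
  rw [integral_finsetSum _ fun k _ => (hX j).integrable_inner (hX k),
    sum_eq_single j (fun k _ hkj => horth hkj.symm) (by simp)]
  simp_rw [real_inner_self_eq_norm_sq]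

theorem ProbabilityTheory.IndepFun.integral_inner [CompleteSpace E] [MeasurableSpace E]
    [BorelSpace E]
    {X Y : Ω → E} (hXY : IndepFun X Y μ) (hX : Integrable X μ) (hY : Integrable Y μ) :
    ∫ ω, ⟪X ω, Y ω⟫_ℝ ∂μ = ⟪∫ ω, X ω ∂μ, ∫ ω, Y ω ∂μ⟫_ℝ :=
  hXY.integral_bilin hX hY (innerSL ℝ)

theorem ProbabilityTheory.iIndepFun.integral_norm_sum_sq {ι : Type*} [Fintype ι]
    [IsFiniteMeasure μ] [CompleteSpace E] [MeasurableSpace E] [BorelSpace E]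
    {X : ι → Ω → E} (hindep : iIndepFun X μ) (hX : ∀ j, MemLp (X j) 2 μ)
    (hmean : ∀ j, ∫ ω, X j ω ∂μ = 0) :
    ∫ ω, ‖∑ j, X j ω‖ ^ 2 ∂μ = ∑ j, ∫ ω, ‖X j ω‖ ^ 2 ∂μ := by
  refine integral_norm_sum_sq_of_pairwise_integral_inner_eq_zero hX fun j k hjk => ?_
  dsimp only
  rw [(hindep.indepFun hjk).integral_inner ((hX j).integrable one_le_two)
    ((hX k).integrable one_le_two), hmean j, inner_zero_left]

theorem integral_norm_add_const_sq [IsProbabilityMeasure μ] [CompleteSpace E] {X : Ω → E}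
    (hX : MemLp X 2 μ) (hmean : ∫ ω, X ω ∂μ = 0) (c : E) :
    ∫ ω, ‖X ω + c‖ ^ 2 ∂μ = ∫ ω, ‖X ω‖ ^ 2 ∂μ + ‖c‖ ^ 2 := by
  have hcross : ∫ ω, ⟪X ω, c⟫_ℝ ∂μ = 0 := by
    simp_rw [real_inner_comm c]
    rw [integral_inner (hX.integrable one_le_two), hmean, inner_zero_right]
  simp_rw [norm_add_sq_real]
  rw [integral_add _ (integrable_const _), integral_add, integral_const_mul, hcross]
  · simp
  · exact hX.integrable_norm_pow two_ne_zero
  · exact (hX.integrable_inner (memLp_const c)).const_mul 2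
  · exact (hX.integrable_norm_pow two_ne_zero).add
      ((hX.integrable_inner (memLp_const c)).const_mul 2)

theorem ProbabilityTheory.iIndepFun.integral_norm_sum_smul_sub_add_sq {ι : Type*} [Fintype ι]
    [IsProbabilityMeasure μ] [CompleteSpace E] [MeasurableSpace E] [BorelSpace E]
    {V : ι → Ω → E} {g : ι → E} (hindep : iIndepFun V μ) (hV : ∀ j, MemLp (V j) 2 μ)
    (hmean : ∀ j, ∫ ω, V j ω ∂μ = g j) (a : ι → ℝ) (c : E) :
    ∫ ω, ‖∑ j, a j • (V j ω - g j) + c‖ ^ 2 ∂μ =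
      ∑ j, a j ^ 2 * ∫ ω, ‖V j ω - g j‖ ^ 2 ∂μ + ‖c‖ ^ 2 := by
  set W : ι → Ω → E := fun j ω => a j • (V j ω - g j)
  have hWindep : iIndepFun W μ := hindep.comp (fun j x => a j • (x - g j)) fun j => by fun_prop
  have hW : ∀ j, MemLp (W j) 2 μ := fun j => ((hV j).sub (memLp_const (g j))).const_smul (a j)
  have hWmean : ∀ j, ∫ ω, W j ω ∂μ = 0 := fun j => by
    rw [integral_smul, integral_sub ((hV j).integrable one_le_two) (integrable_const _), hmean,
      integral_const, probReal_univ, one_smul, sub_self, smul_zero]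
  have hsum : MemLp (fun ω => ∑ j, W j ω) 2 μ := memLp_finsetSum _ fun j _ => hW j
  have hsummean : ∫ ω, ∑ j, W j ω ∂μ = 0 := by
    rw [integral_finsetSum _ fun j _ => (hW j).integrable one_le_two]
    exact sum_eq_zero fun j _ => hWmean j
  rw [integral_norm_add_const_sq hsum hsummean, hWindep.integral_norm_sum_sq hW hWmean]
  simp only [W, norm_smul, mul_pow, Real.norm_eq_abs, sq_abs, integral_const_mul]

end

theorem dev_from_average_noniid_general {d n f : ℕ}
    {Ωs : Type*} [MeasurableSpace Ωs] (μ : Measure Ωs) [IsProbabilityMeasure μ]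
    (V : Fin (n - f) → Ωs → EuclideanSpace ℝ (Fin d))
    (g : Fin (n - f) → EuclideanSpace ℝ (Fin d))
    (hL2 : ∀ i, MemLp (V i) 2 μ)
    (hindep : iIndepFun V μ)
    (σ Δ : ℝ) (μ0 : EuclideanSpace ℝ (Fin d))
    (hmean : ∀ i, ∫ ω, V i ω ∂μ = g i)
    (hvar : ∀ i, ∫ ω, ‖V i ω - g i‖ ^ 2 ∂μ ≤ σ ^ 2)
    (hhet : ((n : ℝ) - f)⁻¹ * ∑ j, ‖g j - μ0‖ ^ 2 ≤ Δ ^ 2) :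
    ∀ i, ∫ ω, ‖V i ω - ((n : ℝ) - f)⁻¹ • ∑ j, V j ω‖ ^ 2 ∂μ ≤
      2 * σ ^ 2 + 2 * ((n : ℝ) - f + 1) * Δ ^ 2 := by
  intro i
  have : Nonempty (Fin (n - f)) := ⟨i⟩
  have hcard : (n : ℝ) - f = Fintype.card (Fin (n - f)) := by
    rw [Fintype.card_fin, Nat.cast_sub (Nat.lt_of_sub_pos i.pos).le]
  rw [hcard] at hhet ⊢
  set κ := (Fintype.card (Fin (n - f)) : ℝ)⁻¹
  have hsplit : ∀ ω, V i ω - κ • ∑ j, V j ω =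
      ∑ j, ((if j = i then 1 else 0) - κ) • (V j ω - g j) + (g i - κ • ∑ j, g j) := fun ω => by
    simp only [sub_smul, ite_smul, one_smul, zero_smul, sum_sub_distrib, sum_ite_eq', mem_univ,
      if_true, smul_sub, ← smul_sum]
    abel
  have hvariance : ∑ j, ((if j = i then 1 else 0) - κ) ^ 2 * ∫ ω, ‖V j ω - g j‖ ^ 2 ∂μ ≤
      2 * σ ^ 2 := calc
    _ ≤ ∑ j, ((if j = i then 1 else 0) - κ) ^ 2 * σ ^ 2 := by gcongr with j; exact hvar j
    _ = (1 - κ) * σ ^ 2 := by rw [← sum_mul, sum_ite_sub_inv_card_sq]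
    _ ≤ 2 * σ ^ 2 := by gcongr; linarith [show 0 ≤ κ by positivity]
  have hbias : ‖g i - κ • ∑ j, g j‖ ^ 2 ≤ 2 * ((Fintype.card (Fin (n - f)) : ℝ) + 1) * Δ ^ 2 :=
    (norm_sub_inv_card_smul_sum_sq_le g μ0 i).trans (by gcongr)
  simp_rw [hsplit]
  rw [hindep.integral_norm_sum_smul_sub_add_sq hL2 hmean]
  exact add_le_add hvariance hbias

/-- non-iid deviation of one good worker's gradient from the average over
all `n - f` good workers.  Under Assumption 1 (`E[V_i] = g_i`, `E[‖V_i - g_i‖₂²] ≤ σ²`,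
`(1/(n-f)) Σ_j ‖g_j - μ₀‖₂² ≤ Δ²`), for every `i`:
`E[‖V_i - (1/(n-f)) Σ_j V_j‖₂²] ≤ 2σ² + 2(n - f + 1)Δ²`. -/
theorem dev_from_average_noniid {d n f : ℕ} (hfn : f < n)
    {Ωs : Type*} [MeasurableSpace Ωs] (μ : Measure Ωs) [IsProbabilityMeasure μ]
    (V : Fin (n - f) → Ωs → EuclideanSpace ℝ (Fin d))
    (g : Fin (n - f) → EuclideanSpace ℝ (Fin d))
    (hint : ∀ i, Integrable (V i) μ)
    (hL2 : ∀ i, MemLp (V i) 2 μ)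
    (hindep : iIndepFun V μ)
    (σ Δ : ℝ) (μ0 : EuclideanSpace ℝ (Fin d))
    (hmean : ∀ i, ∫ ω, V i ω ∂μ = g i)
    (hvar : ∀ i, ∫ ω, ‖V i ω - g i‖ ^ 2 ∂μ ≤ σ ^ 2)
    (hhet : ((n : ℝ) - f)⁻¹ * ∑ j, ‖g j - μ0‖ ^ 2 ≤ Δ ^ 2) :
    ∀ i, ∫ ω, ‖V i ω - ((n : ℝ) - f)⁻¹ • ∑ j, V j ω‖ ^ 2 ∂μ ≤
      2 * σ ^ 2 + 2 * ((n : ℝ) - f + 1) * Δ ^ 2 :=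
  dev_from_average_noniid_general μ V g hL2 hindep σ Δ μ0 hmean hvar hhet
end

section
/- Consider the generalized Krum setup with parameter 1 ≤ p ≤ 2 and deterministic updates G_1,…,G_n ∈ ℝ^d (good updates V_1,…,V_{n−f}, Byzantine updates B_1,…,B_f). Suppose the score-minimizing index i* corresponds to a Byzantine worker, i.e., U = B_k for some k ∈ [f]. Then for every good worker i: Σ_{j∈N_g(k)} ‖B_k − V_j‖₂² ≤ d^{2/p − 1} · (Σ_{j∈N_g(i)} ‖V_i − V_j‖₂² + Σ_{l∈N_b(i)} ‖V_i − B_l‖₂²). -/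
open Finset

private lemma real_rpow_add_le {a b r : ℝ} (ha : 0 ≤ a) (hb : 0 ≤ b) (hr0 : 0 ≤ r)
    (hr1 : r ≤ 1) : (a + b) ^ r ≤ a ^ r + b ^ r := by
  have := NNReal.rpow_add_le_add_rpow ⟨a, ha⟩ ⟨b, hb⟩ hr0 hr1
  exact_mod_cast this

private lemma rpow_sum_le_sum_rpow' {ι : Type*} (s : Finset ι) (f : ι → ℝ)
    (hf : ∀ i ∈ s, 0 ≤ f i) {r : ℝ} (hr0 : 0 < r) (hr1 : r ≤ 1) :
    (∑ i ∈ s, f i) ^ r ≤ ∑ i ∈ s, f i ^ r := by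
  induction s using Finset.cons_induction with
  | empty => simp [Real.zero_rpow hr0.ne']
  | cons a s ha ih =>
    rw [Finset.sum_cons, Finset.sum_cons]
    have hs : 0 ≤ ∑ i ∈ s, f i :=
      Finset.sum_nonneg fun i hi => hf i (Finset.mem_cons_of_mem hi)
    calc (f a + ∑ i ∈ s, f i) ^ r ≤ f a ^ r + (∑ i ∈ s, f i) ^ r :=
          real_rpow_add_le (hf a (Finset.mem_cons_self a s)) hs hr0.le hr1
      _ ≤ f a ^ r + ∑ i ∈ s, f i ^ r := by
          gcongr
          exact ih fun i hi => hf i (Finset.mem_cons_of_mem hi)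

private lemma pnorm_sq_eq {d : ℕ} {p : ℝ} (hp : 0 < p) (x : EuclideanSpace ℝ (Fin d)) :
    pnorm p x ^ 2 = (∑ k, |x k| ^ p) ^ (2 / p) := by
  have hS : 0 ≤ ∑ k, |x k| ^ p :=
    Finset.sum_nonneg fun k _ => Real.rpow_nonneg (abs_nonneg _) _
  rw [pnorm, ← Real.rpow_natCast ((∑ k, |x k| ^ p) ^ (1 / p)) 2, ← Real.rpow_mul hS]
  congr 1
  push_cast
  ring

private lemma norm_sq_eq {d : ℕ} (x : EuclideanSpace ℝ (Fin d)) :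
    ‖x‖ ^ 2 = ∑ k, |x k| ^ (2 : ℕ) := by
  rw [EuclideanSpace.norm_eq, Real.sq_sqrt]
  · simp [sq_abs]
  · exact Finset.sum_nonneg fun k _ => by positivity

private lemma abs_pow_two_rpow {a p : ℝ} (ha : 0 ≤ a) (hp : 0 < p) :
    (a ^ (2 : ℕ)) ^ (p / 2) = a ^ p := by
  rw [← Real.rpow_natCast a 2, ← Real.rpow_mul ha]
  congr 1
  ring

/-- lower bound: `‖x‖² ≤ pnorm p x ²` for `1 ≤ p ≤ 2`. -/
private lemma norm_sq_le_pnorm_sq {d : ℕ} {p : ℝ} (hp1 : 1 ≤ p) (hp2 : p ≤ 2)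
    (x : EuclideanSpace ℝ (Fin d)) : ‖x‖ ^ 2 ≤ pnorm p x ^ 2 := by
  have hp0 : 0 < p := lt_of_lt_of_le one_pos hp1
  have h2 : 0 ≤ ∑ k, |x k| ^ (2 : ℕ) := Finset.sum_nonneg fun k _ => by positivity
  have key : (∑ k, |x k| ^ (2 : ℕ)) ^ (p / 2) ≤ ∑ k, |x k| ^ p := by
    have := rpow_sum_le_sum_rpow' Finset.univ (fun k => |x k| ^ (2 : ℕ))
      (fun k _ => by positivity) (by positivity : (0:ℝ) < p / 2) (by linarith)
    refine this.trans_eq (Finset.sum_congr rfl fun k _ => ?_)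
    exact abs_pow_two_rpow (abs_nonneg _) hp0
  rw [norm_sq_eq, pnorm_sq_eq hp0]
  calc ∑ k, |x k| ^ (2 : ℕ)
      = ((∑ k, |x k| ^ (2 : ℕ)) ^ (p / 2)) ^ (2 / p) := by
        rw [← Real.rpow_mul h2]
        rw [div_mul_div_comm]
        rw [mul_comm, div_self (by positivity), Real.rpow_one]
    _ ≤ (∑ k, |x k| ^ p) ^ (2 / p) := by
        apply Real.rpow_le_rpow (Real.rpow_nonneg h2 _) key
        positivity

/-- upper bound: `pnorm p x ² ≤ d^(2/p-1) ‖x‖²` for `1 ≤ p ≤ 2`. -/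
private lemma pnorm_sq_le {d : ℕ} {p : ℝ} (hp1 : 1 ≤ p) (hp2 : p ≤ 2)
    (x : EuclideanSpace ℝ (Fin d)) :
    pnorm p x ^ 2 ≤ (d : ℝ) ^ (2 / p - 1) * ‖x‖ ^ 2 := by
  have hp0 : 0 < p := lt_of_lt_of_le one_pos hp1
  have hq : 1 ≤ 2 / p := by
    rw [le_div_iff₀ hp0]; linarith
  have := Real.rpow_sum_le_const_mul_sum_rpow_of_nonneg (f := fun k => |x k| ^ p)
    Finset.univ hq (fun k _ => Real.rpow_nonneg (abs_nonneg _) _)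
  rw [pnorm_sq_eq hp0, norm_sq_eq]
  simp only [Finset.card_univ, Fintype.card_fin] at this
  refine this.trans_eq ?_
  congr 1
  refine Finset.sum_congr rfl fun k _ => ?_
  rw [← Real.rpow_natCast (|x k|) 2, ← Real.rpow_mul (abs_nonneg _)]
  rw [mul_div_cancel₀ _ hp0.ne']
  norm_num

/-- in the generalized Krum setup with `1 ≤ p ≤ 2` and deterministic
updates, if the score-minimizing worker `i*` is Byzantine, then for every good worker `i`,
`Σ_{j ∈ N_g(i*)} ‖G i* - G j‖₂² ≤ d^{2/p-1} (Σ_{j ∈ N_g(i)} ‖G i - G j‖₂²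
  + Σ_{l ∈ N_b(i)} ‖G i - G l‖₂²)`. -/
theorem krum_byzantine_selected_bound_p_le_two {n f d : ℕ} (hn : 2 * f + 2 < n)
    (p : ℝ) (hp1 : 1 ≤ p) (hp2 : p ≤ 2)
    (G : Fin n → EuclideanSpace ℝ (Fin d))
    (Good : Finset (Fin n)) (hGood : Good.card = n - f)
    (N : Fin n → Finset (Fin n))
    (hNself : ∀ i, i ∉ N i)
    (hNcard : ∀ i, (N i).card = n - f - 2)
    (hNclosest : ∀ i, ∀ j ∈ N i, ∀ l, l ∉ N i → l ≠ i →
      pnorm p (G i - G j) ≤ pnorm p (G i - G l))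
    (istar : Fin n)
    (hmin : ∀ i, ∑ j ∈ N istar, pnorm p (G istar - G j) ^ 2 ≤
      ∑ j ∈ N i, pnorm p (G i - G j) ^ 2)
    (hbyz : istar ∉ Good) :
    ∀ i ∈ Good,
      ∑ j ∈ N istar ∩ Good, ‖G istar - G j‖ ^ 2 ≤
        (d : ℝ) ^ (2 / p - 1) *
          (∑ j ∈ N i ∩ Good, ‖G i - G j‖ ^ 2 +
            ∑ l ∈ N i \ Good, ‖G i - G l‖ ^ 2) := by
  intro i _
  have hpnn : ∀ (a b : Fin n), 0 ≤ pnorm p (G a - G b) ^ 2 := fun a b => by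
    have : 0 ≤ pnorm p (G a - G b) := Real.rpow_nonneg
      (Finset.sum_nonneg fun k _ => Real.rpow_nonneg (abs_nonneg _) _) _
    positivity
  calc ∑ j ∈ N istar ∩ Good, ‖G istar - G j‖ ^ 2
      ≤ ∑ j ∈ N istar ∩ Good, pnorm p (G istar - G j) ^ 2 :=
        Finset.sum_le_sum fun j _ => norm_sq_le_pnorm_sq hp1 hp2 _
    _ ≤ ∑ j ∈ N istar, pnorm p (G istar - G j) ^ 2 :=
        Finset.sum_le_sum_of_subset_of_nonneg (Finset.inter_subset_left)
          (fun j _ _ => hpnn _ _)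
    _ ≤ ∑ j ∈ N i, pnorm p (G i - G j) ^ 2 := hmin i
    _ = ∑ j ∈ N i ∩ Good, pnorm p (G i - G j) ^ 2
        + ∑ j ∈ N i \ Good, pnorm p (G i - G j) ^ 2 :=
        (Finset.sum_inter_add_sum_sdiff _ _ _).symm
    _ ≤ (d : ℝ) ^ (2 / p - 1) *
          (∑ j ∈ N i ∩ Good, ‖G i - G j‖ ^ 2 +
            ∑ l ∈ N i \ Good, ‖G i - G l‖ ^ 2) := by
        rw [mul_add]
        gcongr ?_ + ?_ <;>
        · refine (Finset.sum_le_sum fun j _ => pnorm_sq_le hp1 hp2 _).trans_eq ?_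
          exact (Finset.mul_sum _ _ _).symm
end
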